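/- θ_ε is harmonic: -Δθ_ε = 0 on the region where it is defined, and |∇θ_ε|² = ½ g'(ψ_ε)/(1-γ_ε²). -/

import Mathlib

noncomputable section

/-- The denominator `cosh y + ε cos x`. -/
def KSden (ε x y : ℝ) : ℝ := Real.cosh y + ε * Real.cos x

/-- The weight `g'(ψ_ε) = 2e^{-2ψ_ε} = 2(1-ε²)/(cosh y + ε cos x)²`. -/
def KSgp (ε x y : ℝ) : ℝ := 2 * (1 - ε ^ 2) / (KSden ε x y) ^ 2

/-- `η_ε = √(1-ε²) sin x/(cosh y + ε cos x)`. -/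
def KSeta (ε x y : ℝ) : ℝ := Real.sqrt (1 - ε ^ 2) * Real.sin x / KSden ε x y

/-- `γ_ε = √(1-ε²) sinh y/(cosh y + ε cos x)`. -/
def KSgam (ε x y : ℝ) : ℝ := Real.sqrt (1 - ε ^ 2) * Real.sinh y / KSden ε x y

/-- `ξ_ε = (ε cosh y + cos x)/(cosh y + ε cos x)`. -/
def KSxi (ε x y : ℝ) : ℝ := (ε * Real.cosh y + Real.cos x) / KSden ε x y

/-- Partial derivative in the first variable. -/
def pdx (f : ℝ → ℝ → ℝ) (x y : ℝ) : ℝ := deriv (fun t => f t y) x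

/-- Partial derivative in the second variable. -/
def pdy (f : ℝ → ℝ → ℝ) (x y : ℝ) : ℝ := deriv (fun t => f x t) y

/-- The Laplacian `Δf = ∂²f/∂x² + ∂²f/∂y²`. -/
def KSlap (f : ℝ → ℝ → ℝ) (x y : ℝ) : ℝ := pdx (pdx f) x y + pdy (pdy f) x y

end

/-- `∂_x θ_ε = γ_{ε,y}/(1-γ_ε²)`. -/
noncomputable def KSthx (ε x y : ℝ) : ℝ := pdy (KSgam ε) x y / (1 - (KSgam ε x y) ^ 2)

/-- `∂_y θ_ε = -γ_{ε,x}/(1-γ_ε²)`. -/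
noncomputable def KSthy (ε x y : ℝ) : ℝ := -(pdx (KSgam ε) x y) / (1 - (KSgam ε x y) ^ 2)

/-! With `z = x + iy` one has `cos z = cos x cosh y - i sin x sinh y`, and this identifies
`∂_x θ_ε - i ∂_y θ_ε` with `√(1-ε²)/(1 + ε cos z)`, while
`|1 + ε cos z|² = (cosh y + ε cos x)² (1 - γ_ε²)`. Where `γ_ε² < 1` this function is holomorphic,
so the Cauchy–Riemann equations give `Δθ_ε = 0`, and `|∇θ_ε|²` is its squared modulus
`(1-ε²)/|1 + ε cos z|²`. -/

open Complex

section CauchyRiemann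

variable {F : ℂ → ℂ} {x y : ℝ}

lemma hasDerivAt_re_comp_horizontal {F' : ℂ} (hF : HasDerivAt F F' (x + y * I)) :
    HasDerivAt (fun t : ℝ => (F (t + y * I)).re) F'.re x :=
  (hF.comp_add_const (x : ℂ) (y * I)).real_of_complex

lemma hasDerivAt_im_comp_vertical {F' : ℂ} (hF : HasDerivAt F F' (x + y * I)) :
    HasDerivAt (fun t : ℝ => (F (x + t * I)).im) F'.re y := by
  have hline : HasDerivAt (fun w : ℂ => (x : ℂ) + w * I) I (y : ℂ) := by
    simpa using ((hasDerivAt_id (y : ℂ)).mul_const I).const_add (x : ℂ)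
  -- `Im F = Re (-i F)`, and the vertical derivative of `F` is `i F'`.
  have hvert := (hF.comp (y : ℂ) hline).const_mul (-I)
  rw [show -I * (F' * I) = F' by ring_nf; rw [I_sq]; ring] at hvert
  simpa [Function.comp_def] using hvert.real_of_complex

lemma pdx_re_eq_pdy_im (hF : DifferentiableAt ℂ F (x + y * I)) :
    pdx (fun a b => (F (a + b * I)).re) x y = pdy (fun a b => (F (a + b * I)).im) x y :=
  (hasDerivAt_re_comp_horizontal hF.hasDerivAt).deriv.trans
    (hasDerivAt_im_comp_vertical hF.hasDerivAt).deriv.symm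

end CauchyRiemann

lemma pdy_neg (f : ℝ → ℝ → ℝ) (x y : ℝ) : pdy (fun a b => -f a b) x y = -pdy f x y :=
  deriv.neg

noncomputable def KScgrad (ε : ℝ) (z : ℂ) : ℂ := Real.sqrt (1 - ε ^ 2) / (1 + ε * cos z)

lemma differentiableAt_KScgrad {ε : ℝ} {z : ℂ} (hz : 1 + ε * cos z ≠ 0) :
    DifferentiableAt ℂ (KScgrad ε) z := by
  unfold KScgrad
  fun_prop (disch := exact hz)

lemma one_add_mul_cos_re (ε x y : ℝ) :
    (1 + ε * cos (x + y * I)).re = 1 + ε * Real.cos x * Real.cosh y := by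
  simp [cos_add_mul_I, ← ofReal_cos, ← ofReal_cosh, ← ofReal_sin, ← ofReal_sinh, mul_assoc]

lemma one_add_mul_cos_im (ε x y : ℝ) :
    (1 + ε * cos (x + y * I)).im = -(ε * Real.sin x * Real.sinh y) := by
  simp [cos_add_mul_I, ← ofReal_cos, ← ofReal_cosh, ← ofReal_sin, ← ofReal_sinh, mul_assoc]

lemma normSq_one_add_mul_cos (ε x y : ℝ) :
    normSq (1 + ε * cos (x + y * I)) = KSden ε x y ^ 2 - (1 - ε ^ 2) * Real.sinh y ^ 2 := by
  rw [normSq_apply, one_add_mul_cos_re, one_add_mul_cos_im, KSden]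
  linear_combination (ε ^ 2 * Real.cos x ^ 2 - 1) * Real.cosh_sq y
    + ε ^ 2 * Real.sinh y ^ 2 * Real.sin_sq_add_cos_sq x

section

variable {ε : ℝ}

lemma KSden_pos (hε : |ε| < 1) (x y : ℝ) : 0 < KSden ε x y := by
  have hcosh := Real.one_le_cosh y
  have hcos : |ε * Real.cos x| ≤ |ε| := by
    rw [abs_mul]
    exact mul_le_of_le_one_right (abs_nonneg ε) (Real.abs_cos_le_one x)
  have hneg := neg_abs_le (ε * Real.cos x)
  unfold KSden
  linarith

lemma sq_sqrt_one_sub_sq (hε : |ε| < 1) : Real.sqrt (1 - ε ^ 2) ^ 2 = 1 - ε ^ 2 :=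
  Real.sq_sqrt (by nlinarith [(sq_lt_one_iff_abs_lt_one ε).2 hε])

lemma pdx_KSgam (hε : |ε| < 1) (x y : ℝ) :
    pdx (KSgam ε) x y
      = Real.sqrt (1 - ε ^ 2) * (ε * Real.sin x * Real.sinh y) / KSden ε x y ^ 2 := by
  have hden : HasDerivAt (fun t => Real.cosh y + ε * Real.cos t) (ε * -Real.sin x) x :=
    ((Real.hasDerivAt_cos x).const_mul ε).const_add _
  have hgam := (hasDerivAt_const x (Real.sqrt (1 - ε ^ 2) * Real.sinh y)).div hden
    (KSden_pos hε x y).ne'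
  unfold pdx KSgam KSden
  refine hgam.deriv.trans ?_
  ring

lemma pdy_KSgam (hε : |ε| < 1) (x y : ℝ) :
    pdy (KSgam ε) x y
      = Real.sqrt (1 - ε ^ 2) * (1 + ε * Real.cos x * Real.cosh y) / KSden ε x y ^ 2 := by
  have hnum : HasDerivAt (fun t => Real.sqrt (1 - ε ^ 2) * Real.sinh t)
      (Real.sqrt (1 - ε ^ 2) * Real.cosh y) y :=
    (Real.hasDerivAt_sinh y).const_mul _
  have hden : HasDerivAt (fun t => Real.cosh t + ε * Real.cos x) (Real.sinh y) y :=
    (Real.hasDerivAt_cosh y).add_const _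
  unfold pdy KSgam KSden
  refine (hnum.div hden (KSden_pos hε x y).ne').deriv.trans ?_
  congr 1
  linear_combination Real.sqrt (1 - ε ^ 2) * Real.cosh_sq y

lemma one_sub_KSgam_sq (hε : |ε| < 1) (x y : ℝ) :
    1 - KSgam ε x y ^ 2 = normSq (1 + ε * cos (x + y * I)) / KSden ε x y ^ 2 := by
  have hD := (KSden_pos hε x y).ne'
  rw [normSq_one_add_mul_cos, KSgam, div_pow, mul_pow, sq_sqrt_one_sub_sq hε]
  field_simp

lemma KSthx_eq_re (hε : |ε| < 1) : KSthx ε = fun x y : ℝ => (KScgrad ε (x + y * I)).re := by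
  ext x y
  have hD2 := pow_ne_zero 2 (KSden_pos hε x y).ne'
  rw [KSthx, pdy_KSgam hε, one_sub_KSgam_sq hε, div_div_div_cancel_right₀ hD2, KScgrad, div_re,
    one_add_mul_cos_re]
  simp

lemma KSthy_eq_neg_im (hε : |ε| < 1) : KSthy ε = fun x y : ℝ => -(KScgrad ε (x + y * I)).im := by
  ext x y
  have hD2 := pow_ne_zero 2 (KSden_pos hε x y).ne'
  rw [KSthy, pdx_KSgam hε, one_sub_KSgam_sq hε, neg_div, div_div_div_cancel_right₀ hD2, KScgrad,
    div_im, one_add_mul_cos_im]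
  simp [neg_div, mul_assoc]

lemma normSq_KScgrad (hε : |ε| < 1) (z : ℂ) :
    normSq (KScgrad ε z) = (1 - ε ^ 2) / normSq (1 + ε * cos z) := by
  rw [KScgrad, normSq_div, normSq_ofReal, ← sq, sq_sqrt_one_sub_sq hε]

end

/-- `θ_ε` is harmonic on the region where it is defined (`γ_ε² < 1`), i.e. `-Δθ_ε = 0`,
and `|∇θ_ε|² = ½ g'(ψ_ε)/(1-γ_ε²)`. -/
theorem stmt7 (ε : ℝ) (hε : ε ∈ Set.Ico (0 : ℝ) 1) (x y : ℝ)
    (h : (KSgam ε x y) ^ 2 < 1) :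
    -(pdx (KSthx ε) x y + pdy (KSthy ε) x y) = 0 ∧
    (KSthx ε x y) ^ 2 + (KSthy ε x y) ^ 2
      = (1/2) * KSgp ε x y / (1 - (KSgam ε x y) ^ 2) := by
  have hε' : |ε| < 1 := abs_lt.2 ⟨by linarith [hε.1], hε.2⟩
  constructor
  · have hw : 1 + ε * cos (x + y * I) ≠ 0 := by
      intro hw
      have := one_sub_KSgam_sq hε' x y
      rw [hw, map_zero, zero_div] at this
      linarith
    rw [KSthx_eq_re hε', KSthy_eq_neg_im hε', pdy_neg,
      pdx_re_eq_pdy_im (differentiableAt_KScgrad hw), add_neg_cancel, neg_zero]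
  · have hD2 := pow_ne_zero 2 (KSden_pos hε' x y).ne'
    rw [KSthx_eq_re hε', KSthy_eq_neg_im hε', neg_sq, sq, sq, ← normSq_apply, normSq_KScgrad hε',
      one_sub_KSgam_sq hε', KSgp, mul_div_assoc, div_div_div_cancel_right₀ hD2]
    ring
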